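/- An LFSA S is strongly infinite-step opaque with respect to Q_S if and only if it is strongly K-step opaque with respect to Q_S for any positive integer K with K > 2^{|Q \ Q_S|} − 2. -/

import Mathlib

/-- A labeled finite-state automaton (LFSA): transition relation `δ`,
initial states `Q0`, labeling `lab` (where `none` stands for ε, i.e. unobservable). -/
structure LFSA (Q : Type*) (E : Type*) (A : Type*) where
  δ : Q → E → Q → Prop
  Q0 : Set Q
  lab : E → Option A

namespace LFSA

variable {Q Q1 Q2 E A : Type*}

/-- A run `q →s q'` over a finite event sequence. -/
inductive Run (S : LFSA Q E A) : Q → List E → Q → Prop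
  | nil (q : Q) : Run S q [] q
  | cons {q q' q'' : Q} {e : E} {s : List E} :
      S.δ q e q' → Run S q' s q'' → Run S q (e :: s) q''

/-- Output (label sequence) of an event sequence. -/
def out (S : LFSA Q E A) (s : List E) : List A := s.filterMap S.lab

/-- Generated finite language. -/
def L (S : LFSA Q E A) : Set (List E) := {s | ∃ q0 ∈ S.Q0, ∃ q, S.Run q0 s q}

/-- Current-state estimate after observing `σ`. -/
def M (S : LFSA Q E A) (σ : List A) : Set Q :=
  {q | ∃ q0 ∈ S.Q0, ∃ s : List E, S.out s = σ ∧ S.Run q0 s q}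

/-- Reachability via a nonempty event sequence. -/
def ReachPlus (S : LFSA Q E A) (q q' : Q) : Prop := ∃ s : List E, s ≠ [] ∧ S.Run q s q'

/-- There is a transition cycle reachable from `q` (a cycle at `q` itself counts). -/
def CycleReachableFrom (S : LFSA Q E A) (q : Q) : Prop :=
  ∃ p : Q, (p = q ∨ S.ReachPlus q p) ∧ ∃ s : List E, s ≠ [] ∧ S.Run p s p

/-- `*`-strong detectability. -/
def StarSD (S : LFSA Q E A) : Prop :=
  ∃ k : ℕ, 0 < k ∧ ∀ s ∈ S.L, ∀ σ : List A, σ <+: S.out s → k < σ.length →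
    ∃ q : Q, S.M σ = {q}

/-- ω-strong detectability. -/
def OmegaSD (S : LFSA Q E A) : Prop :=
  ∃ k : ℕ, 0 < k ∧ ∀ (s : ℕ → E) (ρ : ℕ → Q), ρ 0 ∈ S.Q0 →
    (∀ n : ℕ, S.δ (ρ n) (s n) (ρ (n + 1))) →
    ∀ (n : ℕ) (σ : List A), σ <+: S.out (List.ofFn (fun i : Fin n => s i)) →
      k < σ.length → ∃ q : Q, S.M σ = {q}

/-- Concurrent composition: observable transitions with equal labels synchronize,
unobservable transitions interleave. Events are pairs over `Option E` (`none` = ε). -/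
def CC (S1 : LFSA Q1 E A) (S2 : LFSA Q2 E A) :
    LFSA (Q1 × Q2) (Option E × Option E) A where
  δ p ev p' :=
    match ev with
    | (some e, some e') =>
        (∃ a : A, S1.lab e = some a ∧ S2.lab e' = some a) ∧
          S1.δ p.1 e p'.1 ∧ S2.δ p.2 e' p'.2
    | (some e, none) => S1.lab e = none ∧ S1.δ p.1 e p'.1 ∧ p.2 = p'.2
    | (none, some e') => S2.lab e' = none ∧ p.1 = p'.1 ∧ S2.δ p.2 e' p'.2
    | (none, none) => False
  Q0 := {p | p.1 ∈ S1.Q0 ∧ p.2 ∈ S2.Q0}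
  lab ev := ev.1.bind S1.lab

/-- Left projection of an event sequence of a concurrent composition. -/
def lproj (s : List (Option E × Option E)) : List E := s.filterMap Prod.fst

/-- Right projection of an event sequence of a concurrent composition. -/
def rproj (s : List (Option E × Option E)) : List E := s.filterMap Prod.snd

/-- Unobservable reach of a set of states. -/
def UR (S : LFSA Q E A) (X : Set Q) : Set Q :=
  {q | ∃ q0 ∈ X, ∃ s : List E, S.out s = [] ∧ S.Run q0 s q}

/-- One step of the observer (powerset construction). -/
def obsStep (S : LFSA Q E A) (x : Set Q) (a : A) : Set Q :=
  {q' | ∃ q ∈ x, ∃ (e : E) (p : Q), S.lab e = some a ∧ S.δ q e p ∧ q' ∈ S.UR {p}}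

/-- Observer run (deterministic). -/
def obsRun (S : LFSA Q E A) (x : Set Q) (σ : List A) : Set Q := σ.foldl S.obsStep x

/-- The concurrent composition `CC(S_ε, Obs^ε)` of `S` (with events relabeled by their
labels) and a deterministic observer with step function `ostep` and initial state `x0`:
observable transitions move both components, unobservable ones move only the left one. -/
def CCObs (S : LFSA Q E A) (ostep : Set Q → A → Set Q) (x0 : Set Q) :
    LFSA (Q × Set Q) E A where
  δ p e p' := S.δ p.1 e p'.1 ∧
    (∀ a : A, S.lab e = some a → p'.2 = ostep p.2 a) ∧
    (S.lab e = none → p'.2 = p.2)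
  Q0 := {p | p.1 ∈ S.Q0 ∧ p.2 = x0}
  lab := S.lab

/-- A state is reachable if it is an initial state or reachable from one. -/
def Reachable (S : LFSA Q E A) (q : Q) : Prop := ∃ q0 ∈ S.Q0, ∃ s : List E, S.Run q0 s q

/-- Restriction of an automaton to a set of allowed states. -/
def restrict (S : LFSA Q E A) (P : Set Q) : LFSA Q E A where
  δ q e q' := S.δ q e q' ∧ q ∈ P ∧ q' ∈ P
  Q0 := S.Q0 ∩ P
  lab := S.lab

/-- A run all of whose states (including endpoints) lie in `P`. -/
inductive RunIn (S : LFSA Q E A) (P : Set Q) : Q → List E → Q → Prop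
  | nil (q : Q) : q ∈ P → RunIn S P q [] q
  | cons {q q' q'' : Q} {e : E} {s : List E} :
      q ∈ P → S.δ q e q' → RunIn S P q' s q'' → RunIn S P q (e :: s) q''

/-- Normal subautomaton: all faulty transitions removed. -/
def Sn (S : LFSA Q E A) (Ef : Set E) : LFSA Q E A where
  δ q e q' := S.δ q e q' ∧ e ∉ Ef
  Q0 := S.Q0
  lab := S.lab

/-- Faulty subautomaton: faulty transitions together with all their
predecessor and successor transitions. -/
def Sf (S : LFSA Q E A) (Ef : Set E) : LFSA Q E A where
  δ q e q' := S.δ q e q' ∧ ∃ c f d, f ∈ Ef ∧ S.δ c f d ∧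
      ((q = c ∧ e = f ∧ q' = d) ∨ (c = q' ∨ S.ReachPlus q' c) ∨ (q = d ∨ S.ReachPlus d q))
  Q0 := S.Q0
  lab := S.lab

/-- `s` ends with a faulty event. -/
def EndsFaulty (Ef : Set E) (s : List E) : Prop := ∃ (t : List E) (e : E), e ∈ Ef ∧ s = t ++ [e]

/-- `E_f`-diagnosability. -/
def Diag (S : LFSA Q E A) (Ef : Set E) : Prop :=
  ∃ k : ℕ, ∀ s ∈ S.L, EndsFaulty Ef s → ∀ s' : List E, s ++ s' ∈ S.L → k < s'.length →
    ∀ s'' ∈ S.L, S.out s'' = S.out (s ++ s') → ∃ e ∈ Ef, e ∈ s''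

/-- `E_f`-predictability. -/
def Pred (S : LFSA Q E A) (Ef : Set E) : Prop :=
  ∃ k : ℕ, ∀ s ∈ S.L, EndsFaulty Ef s →
    ∃ s' : List E, s' <+: s ∧ (∀ e ∈ s', e ∉ Ef) ∧
      ∀ u v : List E, u ++ v ∈ S.L → S.out s' = S.out u → (∀ e ∈ u, e ∉ Ef) →
        k < v.length → ∃ e ∈ Ef, e ∈ v

/-- Current-state opacity. -/
def CSO (S : LFSA Q E A) (QS : Set Q) : Prop :=
  ∀ q0 ∈ S.Q0, ∀ (s : List E) (q : Q), S.Run q0 s q → q ∈ QS →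
    ∃ q0' ∈ S.Q0, ∃ (s' : List E) (q' : Q), S.Run q0' s' q' ∧ q' ∉ QS ∧ S.out s = S.out s'

/-- Initial-state opacity. -/
def ISO (S : LFSA Q E A) (QS : Set Q) : Prop :=
  ∀ q0 ∈ S.Q0 ∩ QS, ∀ (s : List E) (q : Q), S.Run q0 s q →
    ∃ q0' ∈ S.Q0 \ QS, ∃ (s' : List E) (q' : Q), S.Run q0' s' q' ∧ S.out s = S.out s'

/-- Infinite-step opacity. -/
def InfSO (S : LFSA Q E A) (QS : Set Q) : Prop :=
  ∀ q0 ∈ S.Q0, ∀ (s1 : List E) (q1 : Q) (s2 : List E) (q2 : Q),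
    S.Run q0 s1 q1 → S.Run q1 s2 q2 → q1 ∈ QS →
    ∃ q0' ∈ S.Q0, ∃ (s1' : List E) (q1' : Q) (s2' : List E) (q2' : Q),
      S.Run q0' s1' q1' ∧ S.Run q1' s2' q2' ∧ q1' ∉ QS ∧
        S.out s1 = S.out s1' ∧ S.out s2 = S.out s2'

/-- `K`-step opacity. -/
def KSO (S : LFSA Q E A) (QS : Set Q) (K : ℕ) : Prop :=
  ∀ q0 ∈ S.Q0, ∀ (s1 : List E) (q1 : Q) (s2 : List E) (q2 : Q),
    S.Run q0 s1 q1 → S.Run q1 s2 q2 → q1 ∈ QS → (S.out s2).length ≤ K →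
    ∃ q0' ∈ S.Q0, ∃ (s1' : List E) (q1' : Q) (s2' : List E) (q2' : Q),
      S.Run q0' s1' q1' ∧ S.Run q1' s2' q2' ∧ q1' ∉ QS ∧
        S.out s1 = S.out s1' ∧ S.out s2 = S.out s2'

/-- Strong current-state opacity: the matching run is entirely non-secret. -/
def SCSO (S : LFSA Q E A) (QS : Set Q) : Prop :=
  ∀ q0 ∈ S.Q0, ∀ (s : List E) (q : Q), S.Run q0 s q → q ∈ QS →
    ∃ q0' ∈ S.Q0, ∃ (s' : List E) (q' : Q), S.RunIn QSᶜ q0' s' q' ∧ S.out s = S.out s'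

/-- Strong initial-state opacity. -/
def SISO (S : LFSA Q E A) (QS : Set Q) : Prop :=
  ∀ q0 ∈ S.Q0 ∩ QS, ∀ (s : List E) (q : Q), S.Run q0 s q →
    ∃ q0' ∈ S.Q0 \ QS, ∃ (s' : List E) (q' : Q), S.RunIn QSᶜ q0' s' q' ∧ S.out s = S.out s'

/-- Strong infinite-step opacity. -/
def SInfSO (S : LFSA Q E A) (QS : Set Q) : Prop :=
  ∀ q0 ∈ S.Q0, ∀ (s1 : List E) (q1 : Q) (s2 : List E) (q2 : Q),
    S.Run q0 s1 q1 → S.Run q1 s2 q2 → q1 ∈ QS →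
    ∃ q0' ∈ S.Q0, ∃ (s1' : List E) (q1' : Q) (s2' : List E) (q2' : Q),
      S.RunIn QSᶜ q0' s1' q1' ∧ S.RunIn QSᶜ q1' s2' q2' ∧
        S.out s1 = S.out s1' ∧ S.out s2 = S.out s2'

/-- Strong `K`-step opacity. -/
def SKSO (S : LFSA Q E A) (QS : Set Q) (K : ℕ) : Prop :=
  ∀ q0 ∈ S.Q0, ∀ (s1 : List E) (q1 : Q) (s2 : List E) (q2 : Q),
    S.Run q0 s1 q1 → S.Run q1 s2 q2 → q1 ∈ QS → (S.out s2).length ≤ K →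
    ∃ q0' ∈ S.Q0, ∃ (s1' : List E) (q1' : Q) (s2' : List E) (q2' : Q),
      S.RunIn QSᶜ q0' s1' q1' ∧ S.RunIn QSᶜ q1' s2' q2' ∧
        S.out s1 = S.out s1' ∧ S.out s2 = S.out s2'

/-- Observer step of the secret-deleted subautomaton `S_dss`. -/
def dssObsStep (S : LFSA Q E A) (QS : Set Q) : Set Q → A → Set Q :=
  (S.restrict QSᶜ).obsStep

/-- Initial observer state of the secret-deleted subautomaton. -/
def dssInit (S : LFSA Q E A) (QS : Set Q) : Set Q :=
  (S.restrict QSᶜ).UR (S.restrict QSᶜ).Q0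

end LFSA

/-! A secret run whose observation after its last secret state `y` is long can be shortened.
After `y` the run is non-secret; to each position `j` of its observation attach the nonempty set
of non-secret states from which a non-secret run produces the rest of the observation from `j` on.
There are at most `2 ^ |Q \ Q_S| - 1` such sets, so two positions `i < i'` share one, and cutting out
the observation between them yields a secret run with a shorter observation. A non-secret run
matching the shortened observation can be re-extended, through the shared set, into one matching
the original observation. Induction on the observation length therefore reduces strong
infinite-step opacity to observations of length at most `K`. -/

lemma exists_lt_eq_of_two_pow_le {Q : Type*} {P : Set Q} (hP : P.Finite) {f : ℕ → Set Q}
    {L : ℕ} (hf : ∀ j ≤ L, f j ⊆ P ∧ (f j).Nonempty) (hL : 2 ^ P.ncard ≤ L + 1) :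
    ∃ i i', i < i' ∧ i' ≤ L ∧ f i = f i' := by
  have hcard : (𝒫 P \ {∅}).ncard < (↑(Finset.range (L + 1)) : Set ℕ).ncard := by
    rw [Set.ncard_sdiff_singleton_of_mem (Set.empty_subset P),
      Set.ncard_powerset P hP, Set.ncard_coe_finset, Finset.card_range]
    have := Nat.one_le_two_pow (n := P.ncard)
    omega
  have hmaps : ∀ j ∈ (↑(Finset.range (L + 1)) : Set ℕ), f j ∈ 𝒫 P \ {∅} := by
    intro j hj
    obtain ⟨hsub, hne⟩ := hf j (Nat.lt_succ_iff.mp (Finset.mem_range.mp hj))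
    exact ⟨hsub, hne.ne_empty⟩
  obtain ⟨i, hi, i', hi', hne, heq⟩ :=
    Set.exists_ne_map_eq_of_ncard_lt_of_maps_to hcard hmaps (hP.powerset.sdiff)
  simp only [Finset.coe_range, Set.mem_Iio] at hi hi'
  rcases Nat.lt_or_gt_of_ne hne with h | h
  · exact ⟨i, i', h, by omega, heq⟩
  · exact ⟨i', i, h, by omega, heq.symm⟩

namespace LFSA

variable {Q E A : Type*} {S : LFSA Q E A} {P : Set Q}

lemma out_append (S : LFSA Q E A) (s t : List E) :
    S.out (s ++ t) = S.out s ++ S.out t :=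
  List.filterMap_append

@[simp]
lemma out_nil (S : LFSA Q E A) : S.out [] = [] := rfl

lemma out_cons (S : LFSA Q E A) (e : E) (t : List E) :
    S.out (e :: t) = S.out [e] ++ S.out t :=
  S.out_append [e] t

lemma length_out_singleton_le (S : LFSA Q E A) (e : E) : (S.out [e]).length ≤ 1 := by
  cases h : S.lab e <;> simp [out, h]

lemma Run.append {q q' q'' : Q} {s t : List E} (h₁ : S.Run q s q') (h₂ : S.Run q' t q'') :
    S.Run q (s ++ t) q'' := by
  induction h₁ with
  | nil => exact h₂
  | cons hd _ ih => exact .cons hd (ih h₂)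

lemma RunIn.append {q q' q'' : Q} {s t : List E} (h₁ : S.RunIn P q s q')
    (h₂ : S.RunIn P q' t q'') : S.RunIn P q (s ++ t) q'' := by
  induction h₁ with
  | nil => exact h₂
  | cons hq hd _ ih => exact .cons hq hd (ih h₂)

lemma RunIn.start_mem {q q' : Q} {s : List E} (h : S.RunIn P q s q') : q ∈ P := by
  cases h with
  | nil _ hq => exact hq
  | cons hq _ _ => exact hq

lemma RunIn.toRun {q q' : Q} {s : List E} (h : S.RunIn P q s q') : S.Run q s q' := by
  induction h with
  | nil => exact .nil _
  | cons _ hd _ ih => exact .cons hd ih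

lemma RunIn.exists_split {q q'' : Q} {s : List E} (h : S.RunIn P q s q'') {α β : List A}
    (hαβ : S.out s = α ++ β) :
    ∃ (t u : List E) (q' : Q), S.RunIn P q t q' ∧ S.RunIn P q' u q'' ∧
      S.out t = α ∧ S.out u = β := by
  induction h generalizing α with
  | nil q hq =>
    obtain ⟨rfl, rfl⟩ := List.append_eq_nil_iff.mp hαβ.symm
    exact ⟨[], [], q, .nil q hq, .nil q hq, rfl, rfl⟩
  | @cons q q' q'' e s hq hd hs ih =>
    rcases α with _ | ⟨a, α⟩
    · exact ⟨[], e :: s, q, .nil q hq, .cons hq hd hs, rfl, hαβ⟩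
    cases hlab : S.lab e with
    | none =>
      have hs_out : S.out s = a :: α ++ β := by simpa [out, hlab] using hαβ
      obtain ⟨t, u, x, ht, hu, hto, rfl⟩ := ih hs_out
      exact ⟨e :: t, u, x, .cons hq hd ht, hu, by simpa [out, hlab] using hto, rfl⟩
    | some b =>
      obtain ⟨rfl, hs_out⟩ : b = a ∧ S.out s = α ++ β := by simpa [out, hlab] using hαβ
      obtain ⟨t, u, x, ht, hu, rfl, rfl⟩ := ih hs_out
      exact ⟨e :: t, u, x, .cons hq hd ht, hu, by simp [out, hlab], rfl⟩

lemma Run.runIn_or_exists_last_exit {q q' : Q} {v : List E} (h : S.Run q v q') (hq' : q' ∈ P) :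
    S.RunIn P q v q' ∨ ∃ (u : List E) (y : Q) (e : E) (p : Q) (t : List E),
      v = u ++ e :: t ∧ S.Run q u y ∧ y ∉ P ∧ S.δ y e p ∧ S.RunIn P p t q' := by
  induction h with
  | nil => exact .inl (.nil _ hq')
  | @cons q p q' e s hd hs ih =>
    obtain hin | ⟨u, y, e', p', t, rfl, hu, hy, hd', ht⟩ := ih hq'
    · by_cases hq : q ∈ P
      · exact .inl (.cons hq hd hin)
      · exact .inr ⟨[], q, e, p, s, rfl, .nil q, hq, hd, hin⟩
    · exact .inr ⟨e :: u, y, e', p', t, rfl, .cons hd hu, hy, hd', ht⟩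

def obsLangIn (S : LFSA Q E A) (P : Set Q) : Set (List A) :=
  {σ | ∃ q0 ∈ S.Q0, ∃ (s : List E) (q : Q), S.RunIn P q0 s q ∧ S.out s = σ}

def coReach (S : LFSA Q E A) (P : Set Q) (σ : List A) : Set Q :=
  {z | ∃ (s : List E) (z' : Q), S.RunIn P z s z' ∧ S.out s = σ}

lemma exists_runIn_runIn_iff {α β : List A} :
    (∃ q0 ∈ S.Q0, ∃ (s1 : List E) (q1 : Q) (s2 : List E) (q2 : Q),
      S.RunIn P q0 s1 q1 ∧ S.RunIn P q1 s2 q2 ∧ α = S.out s1 ∧ β = S.out s2) ↔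
      α ++ β ∈ S.obsLangIn P := by
  constructor
  · rintro ⟨q0, hq0, s1, q1, s2, q2, h1, h2, rfl, rfl⟩
    exact ⟨q0, hq0, s1 ++ s2, q2, h1.append h2, S.out_append s1 s2⟩
  · rintro ⟨q0, hq0, s, q, hs, hout⟩
    obtain ⟨s1, s2, q1, h1, h2, rfl, rfl⟩ := hs.exists_split hout
    exact ⟨q0, hq0, s1, q1, s2, q, h1, h2, rfl, rfl⟩

lemma coReach_subset (σ : List A) : S.coReach P σ ⊆ P :=
  fun _ ⟨_, _, hs, _⟩ ↦ hs.start_mem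

lemma RunIn.coReach_drop_nonempty {p q : Q} {t : List E} (ht : S.RunIn P p t q) (j : ℕ) :
    (S.coReach P ((S.out t).drop j)).Nonempty := by
  obtain ⟨-, t₂, z, -, ht₂, -, hout⟩ := ht.exists_split (List.take_append_drop j (S.out t)).symm
  exact ⟨z, t₂, q, ht₂, hout⟩

lemma append_mem_obsLangIn_of_coReach_eq {α β β' : List A}
    (hβ : S.coReach P β = S.coReach P β') (h : α ++ β ∈ S.obsLangIn P) :
    α ++ β' ∈ S.obsLangIn P := by
  rw [← exists_runIn_runIn_iff] at h ⊢
  obtain ⟨q0, hq0, s1, q1, s2, q2, h1, h2, rfl, rfl⟩ := h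
  obtain ⟨s2', q2', h2', rfl⟩ : q1 ∈ S.coReach P β' := hβ ▸ ⟨s2, q2, h2, rfl⟩
  exact ⟨q0, hq0, s1, q1, s2', q2', h1, h2', rfl, rfl⟩

lemma RunIn.exists_shorter_of_two_pow_le (hP : P.Finite) {p q : Q} {t : List E}
    (ht : S.RunIn P p t q) (hlen : 2 ^ P.ncard ≤ (S.out t).length + 1) :
    ∃ (t' : List E) (z : Q), S.RunIn P p t' z ∧ (S.out t').length < (S.out t).length ∧
      ∀ α : List A, α ++ S.out t' ∈ S.obsLangIn P → α ++ S.out t ∈ S.obsLangIn P := by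
  set β := S.out t
  obtain ⟨i, i', hii', hi', heq⟩ := exists_lt_eq_of_two_pow_le hP
    (f := fun j ↦ S.coReach P (β.drop j))
    (fun j _ ↦ ⟨coReach_subset _, ht.coReach_drop_nonempty j⟩) hlen
  obtain ⟨t₁, t₂, z, ht₁, ht₂, hout₁, hout₂⟩ := ht.exists_split (List.take_append_drop i β).symm
  obtain ⟨t₃, z', ht₃, hout₃⟩ : z ∈ S.coReach P (β.drop i') := heq ▸ ⟨t₂, q, ht₂, hout₂⟩
  refine ⟨t₁ ++ t₃, z', ht₁.append ht₃, ?_, fun α h ↦ ?_⟩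
  · rw [out_append, hout₁, hout₃, List.length_append, List.length_take, List.length_drop]
    omega
  · have := append_mem_obsLangIn_of_coReach_eq (α := α ++ β.take i) heq.symm
      (by rwa [List.append_assoc, ← hout₁, ← hout₃, ← out_append])
    rwa [List.append_assoc, List.take_append_drop] at this

lemma SInfSO.sKSO {QS : Set Q} (h : S.SInfSO QS) (K : ℕ) : S.SKSO QS K :=
  fun q0 hq0 s1 q1 s2 q2 h1 h2 hq1 _ ↦ h q0 hq0 s1 q1 s2 q2 h1 h2 hq1

theorem SKSO.append_out_mem_obsLangIn {QS : Set Q} {K : ℕ} (hS : S.SKSO QS K)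
    (hfin : QSᶜ.Finite) (hK : 2 ^ QSᶜ.ncard - 2 < K) {q0 x q : Q} {s v : List E}
    (hq0 : q0 ∈ S.Q0) (hs : S.Run q0 s x) (hx : x ∈ QS) (hv : S.Run x v q) :
    S.out s ++ S.out v ∈ S.obsLangIn QSᶜ := by
  have kso : ∀ {s₁ s₂ : List E} {q₁ q₂ : Q}, S.Run q0 s₁ q₁ → q₁ ∈ QS → S.Run q₁ s₂ q₂ →
      (S.out s₂).length ≤ K → S.out s₁ ++ S.out s₂ ∈ S.obsLangIn QSᶜ :=
    fun h₁ hq₁ h₂ hle ↦ exists_runIn_runIn_iff.mp (hS q0 hq0 _ _ _ _ h₁ h₂ hq₁ hle)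
  by_cases hq : q ∈ QS
  · simpa [out_append] using kso (hs.append hv) hq (.nil q) (by simp)
  obtain hin | ⟨u, y, e, p, t, rfl, hu, hy, hd, ht⟩ := hv.runIn_or_exists_last_exit (P := QSᶜ) hq
  · exact absurd hx hin.start_mem
  rw [Set.notMem_compl_iff] at hy
  have hsu := hs.append hu
  rw [out_append, ← List.append_assoc, ← out_append]
  by_cases hle : (S.out (e :: t)).length ≤ K
  · exact kso hsu hy (.cons hd ht.toRun) hle
  have hlen₁ := S.length_out_singleton_le e
  rw [out_cons, List.length_append] at hle
  obtain ⟨t', z, ht', hlt, htransfer⟩ := ht.exists_shorter_of_two_pow_le hfin (by omega)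
  have hshorter : (S.out (e :: t')).length < (S.out (u ++ e :: t)).length := by
    rw [out_append, out_cons S e t', out_cons S e t]
    simp only [List.length_append]
    omega
  have := hS.append_out_mem_obsLangIn hfin hK hq0 hsu hy (.cons hd ht'.toRun)
  rw [out_cons, ← List.append_assoc] at this ⊢
  exact htransfer _ this
termination_by (S.out v).length
decreasing_by subst_vars; exact hshorter

end LFSA

/-- strong infinite-step opacity coincides with strong `K`-step
opacity for any `K > 2^{|Q \ Q_S|} - 2`. -/
theorem stmt18 {Q E A : Type*} [Fintype Q] (S : LFSA Q E A) (QS : Set Q)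
    (K : ℕ) (hK : 2 ^ (QSᶜ : Set Q).ncard - 2 < K) :
    S.SInfSO QS ↔ S.SKSO QS K :=
  ⟨fun h ↦ h.sKSO K, fun h _ hq0 _ _ _ _ h1 h2 hq1 ↦ LFSA.exists_runIn_runIn_iff.mpr
    (h.append_out_mem_obsLangIn (Set.toFinite _) hK hq0 h1 hq1 h2)⟩
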